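/- Let B*(s) = −2^{s+1}·Γ(s+2)/((1 − 2^{s+1})(1 − 2^{s+2})). For every real z > 0, the function s ↦ B*(s)·z^{−s} has a double pole at s = −2 with residue lim_{s→−2} (d/ds)[(s+2)²·B*(s)·z^{−s}] = −z²·log₂ z + z²·(3 ln 2 − 2γ)/(2 ln 2), where γ is Euler's constant. -/

import Mathlib

open Filter
open scoped Topology

noncomputable section

/-- The Mellin transform of the shifted poissonized mean,
`B*(s) = −2^{s+1} Γ(s+2) / ((1 − 2^{s+1})(1 − 2^{s+2}))`. -/
def Bstar (s : ℂ) : ℂ :=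
  -((2 : ℂ) ^ (s + 1)) * Complex.Gamma (s + 2) /
    ((1 - (2 : ℂ) ^ (s + 1)) * (1 - (2 : ℂ) ^ (s + 2)))

/-!
Write `1 - 2^{s+2} = -(s + 2) D(s + 2)` with `D = dslope (2 ^ ·) 0`, which is analytic with
`D 0 = log 2`, and `(s + 2) Γ(s + 2) = Γ(s + 3)`. Then `(s + 2)² B*(s) z^{-s}` agrees off `-2` with
`G(s) = 2^{s+1} Γ(s+3) z^{-s} / ((1 - 2^{s+1}) D(s+2))`, which is analytic at `-2`, so the
derivatives converge to `G'(-2)`. Here `G(-2) = z² / log 2` and the logarithmic derivative at `-2`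
is `log 2 - γ - log z + log 2 - D'(0)/D(0)`, where `D'(0) = (log 2)²/2` is half the second
derivative of `2^u` at `0`.
-/

section Removable

variable {𝕜 : Type*} [NontriviallyNormedField 𝕜]
  {E : Type*} [NormedAddCommGroup E] [NormedSpace 𝕜 E] {f g : 𝕜 → E} {a : 𝕜}

theorem AnalyticAt.dslope (hf : AnalyticAt 𝕜 f a) : AnalyticAt 𝕜 (dslope f a) a :=
  let ⟨_, hp⟩ := hf
  ⟨_, hp.has_fpower_series_dslope_fslope⟩

variable [CompleteSpace E]

-- Differentiate `f w = f a + (w - a) • dslope f a w` twice at `a`.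
theorem deriv_deriv_eq_two_smul_deriv_dslope (hf : AnalyticAt 𝕜 f a) :
    deriv (deriv f) a = (2 : 𝕜) • deriv (dslope f a) a := by
  have hD := hf.dslope
  have hf_eq : f = fun v => f a + (v - a) • dslope f a v := by
    funext v
    rw [sub_smul_dslope]
    abel
  have hderiv : deriv f =ᶠ[𝓝 a] fun w => dslope f a w + (w - a) • deriv (dslope f a) w := by
    filter_upwards [hD.eventually_analyticAt] with w hw
    rw [hf_eq]
    exact ((((hasDerivAt_id w).sub_const a).smul hw.differentiableAt.hasDerivAt).const_add
      (f a)).deriv.trans (by simp [add_comm])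
  have hprod := ((hasDerivAt_id a).sub_const a).smul hD.deriv.differentiableAt.hasDerivAt
  rw [hderiv.deriv_eq]
  exact (hD.differentiableAt.hasDerivAt.add hprod).deriv.trans (by simp [two_smul])

theorem tendsto_deriv_of_eventuallyEq_analyticAt (hg : AnalyticAt 𝕜 g a)
    (hfg : f =ᶠ[𝓝[≠] a] g) : Tendsto (deriv f) (𝓝[≠] a) (𝓝 (deriv g a)) := by
  have hderiv : deriv f =ᶠ[𝓝[≠] a] deriv g := by
    filter_upwards [eventually_eventually_nhdsWithin.mpr hfg, self_mem_nhdsWithin] with w hw hwa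
    rw [isOpen_compl_singleton.nhdsWithin_eq hwa] at hw
    exact EventuallyEq.deriv_eq hw
  exact (hg.deriv.continuousAt.tendsto.mono_left nhdsWithin_le_nhds).congr' hderiv.symm

end Removable

namespace Complex

section ConstCpow

variable {b : ℂ}

theorem hasDerivAt_const_cpow (hb : b ≠ 0) (u : ℂ) :
    HasDerivAt (fun u : ℂ => b ^ u) (b ^ u * log b) u :=
  (hasStrictDerivAt_const_cpow (.inl hb)).hasDerivAt

theorem analyticAt_const_cpow (hb : b ≠ 0) (u : ℂ) : AnalyticAt ℂ (fun u : ℂ => b ^ u) u :=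
  Differentiable.analyticAt (fun v => (hasDerivAt_const_cpow hb v).differentiableAt) u

theorem dslope_const_cpow_zero_self (hb : b ≠ 0) : dslope (fun u : ℂ => b ^ u) 0 0 = log b := by
  rw [dslope_same, (hasDerivAt_const_cpow hb 0).deriv, cpow_zero, one_mul]

theorem deriv_dslope_const_cpow_zero_self (hb : b ≠ 0) :
    deriv (dslope (fun u : ℂ => b ^ u) 0) 0 = log b ^ 2 / 2 := by
  have hderiv : deriv (fun u : ℂ => b ^ u) = fun u => b ^ u * log b :=
    funext fun u => (hasDerivAt_const_cpow hb u).deriv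
  have h := deriv_deriv_eq_two_smul_deriv_dslope (analyticAt_const_cpow hb 0)
  rw [hderiv, ((hasDerivAt_const_cpow hb 0).mul_const (log b)).deriv, cpow_zero, smul_eq_mul] at h
  linear_combination -h / 2

end ConstCpow

theorem analyticAt_Gamma_of_re_pos {s : ℂ} (hs : 0 < s.re) : AnalyticAt ℂ Gamma s := by
  rw [analyticAt_iff_eventually_differentiableAt]
  filter_upwards [(continuous_re.isOpen_preimage _ isOpen_Ioi).mem_nhds hs] with w hw
  refine differentiableAt_Gamma w fun m hm => ?_
  have hre : w.re = -m := by simp [hm]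
  linarith [show 0 < w.re from hw, m.cast_nonneg (α := ℝ)]

theorem log_two_ne_zero : log 2 ≠ 0 := by
  rw [← ofReal_ofNat, ← ofReal_log zero_le_two, ofReal_ne_zero]
  exact (Real.log_pos one_lt_two).ne'

end Complex

open Complex

def residueFactor (L w : ℂ) : ℂ :=
  2 ^ (w + 1) * Gamma (w + 3) * exp (-w * L) /
    ((1 - 2 ^ (w + 1)) * dslope (fun u : ℂ => (2 : ℂ) ^ u) 0 (w + 2))

-- No nonvanishing hypotheses: where a denominator vanishes, both sides are `x / 0 = 0`.
theorem sq_mul_Bstar_mul_exp_eq_residueFactor (L : ℂ) {w : ℂ} (hw : w ≠ -2) :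
    (w + 2) ^ 2 * Bstar w * exp (-w * L) = residueFactor L w := by
  have hw2 : w + 2 ≠ 0 := fun h => hw (eq_neg_of_add_eq_zero_left h)
  have hden : 1 - (2 : ℂ) ^ (w + 2) = -((w + 2) * dslope (fun u : ℂ => (2 : ℂ) ^ u) 0 (w + 2)) := by
    have h := sub_smul_dslope (fun u : ℂ => (2 : ℂ) ^ u) 0 (w + 2)
    rw [sub_zero, smul_eq_mul, cpow_zero] at h
    rw [h]
    ring
  have hΓ : Gamma (w + 3) = (w + 2) * Gamma (w + 2) := by
    rw [show w + 3 = w + 2 + 1 by ring, Gamma_add_one _ hw2]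
  rw [Bstar, residueFactor, hden, hΓ]
  field_simp

theorem residueFactor_denom_ne_zero :
    (1 - (2 : ℂ) ^ ((-2 : ℂ) + 1)) * dslope (fun u : ℂ => (2 : ℂ) ^ u) 0 ((-2 : ℂ) + 2) ≠ 0 := by
  rw [show (-2 : ℂ) + 2 = 0 by norm_num, show (-2 : ℂ) + 1 = -1 by norm_num,
    dslope_const_cpow_zero_self two_ne_zero, cpow_neg_one]
  exact mul_ne_zero (by norm_num) log_two_ne_zero

theorem analyticAt_residueFactor (L : ℂ) : AnalyticAt ℂ (residueFactor L) (-2) := by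
  have h2 : AnalyticAt ℂ (fun w : ℂ => (2 : ℂ) ^ (w + 1)) (-2) :=
    (analyticAt_const_cpow two_ne_zero _).comp (analyticAt_id.add analyticAt_const)
  have hΓ : AnalyticAt ℂ (fun w : ℂ => Gamma (w + 3)) (-2) :=
    (analyticAt_Gamma_of_re_pos (by norm_num)).comp (analyticAt_id.add analyticAt_const)
  have hD : AnalyticAt ℂ (fun w : ℂ => dslope (fun u : ℂ => (2 : ℂ) ^ u) 0 (w + 2)) (-2) :=
    (analyticAt_const_cpow two_ne_zero 0).dslope.comp_of_eq
      (analyticAt_id.add analyticAt_const) (by norm_num)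
  exact ((h2.mul hΓ).mul (analyticAt_id.neg.mul analyticAt_const).cexp').div
    ((analyticAt_const.sub h2).mul hD) residueFactor_denom_ne_zero

theorem hasDerivAt_residueFactor (L : ℂ) :
    HasDerivAt (residueFactor L)
      (exp (2 * L) * (3 * log 2 - 2 * Real.eulerMascheroniConstant - 2 * L) / (2 * log 2))
      (-2) := by
  have hP : HasDerivAt (fun w : ℂ => (2 : ℂ) ^ (w + 1)) (2 ^ ((-2 : ℂ) + 1) * log 2 * 1) (-2) :=
    (hasDerivAt_const_cpow two_ne_zero _).comp (-2) ((hasDerivAt_id _).add_const 1)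
  have hΓ : HasDerivAt (fun w : ℂ => Gamma (w + 3)) (-Real.eulerMascheroniConstant * 1) (-2) :=
    hasDerivAt_Gamma_one.comp_of_eq (-2) ((hasDerivAt_id _).add_const 3) (by norm_num)
  have hE : HasDerivAt (fun w : ℂ => exp (-w * L)) (exp (-(-2) * L) * (-1 * L)) (-2) :=
    ((hasDerivAt_id _).neg.mul_const L).cexp
  have hD : HasDerivAt (fun w : ℂ => dslope (fun u : ℂ => (2 : ℂ) ^ u) 0 (w + 2))
      (log 2 ^ 2 / 2 * 1) (-2) := by
    refine HasDerivAt.comp_of_eq (y := 0) (-2) ?_ ((hasDerivAt_id _).add_const 2) (by norm_num)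
    rw [← deriv_dslope_const_cpow_zero_self two_ne_zero]
    exact (analyticAt_const_cpow two_ne_zero 0).dslope.differentiableAt.hasDerivAt
  refine (((hP.mul hΓ).mul hE).div ((hP.const_sub 1).mul hD)
    residueFactor_denom_ne_zero).congr_deriv ?_
  simp only [Pi.mul_apply, show (-2 : ℂ) + 1 = -1 by norm_num, show (-2 : ℂ) + 3 = 1 by norm_num,
    show (-2 : ℂ) + 2 = 0 by norm_num, cpow_neg_one, Gamma_one,
    dslope_const_cpow_zero_self two_ne_zero]
  have := log_two_ne_zero
  field_simp
  ring

/-- For `z > 0`, the function `s ↦ B*(s) z^{−s}` has a double pole at `s = −2` whose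
residue, `lim_{s→−2} (d/ds)[(s+2)² B*(s) z^{−s}]`, equals
`−z² log₂ z + z² (3 ln 2 − 2γ)/(2 ln 2)`. Here `z^{−s} = e^{−s ln z}`. -/
theorem residue_Bstar_double_pole (z : ℝ) (hz : 0 < z) :
    Tendsto
      (fun s : ℂ =>
        deriv (fun w : ℂ => (w + 2) ^ 2 * Bstar w * Complex.exp (-w * Real.log z)) s)
      (𝓝[≠] (-2))
      (𝓝 (((-(z ^ 2) * Real.logb 2 z +
          z ^ 2 * (3 * Real.log 2 - 2 * Real.eulerMascheroniConstant) /
            (2 * Real.log 2) : ℝ) : ℂ))) := by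
  have hlim := tendsto_deriv_of_eventuallyEq_analyticAt (analyticAt_residueFactor (Real.log z))
    (eventually_nhdsWithin_of_forall fun w hw => sq_mul_Bstar_mul_exp_eq_residueFactor _ hw)
  rw [(hasDerivAt_residueFactor _).deriv] at hlim
  convert hlim using 2
  have hexp : exp (2 * Real.log z) = ((z ^ 2 : ℝ) : ℂ) := by
    rw [← ofReal_ofNat, ← ofReal_mul, ← ofReal_exp, ← Nat.cast_ofNat, ← Real.log_pow,
      Real.exp_log (pow_pos hz 2)]
  have hlog2 : log 2 = ((Real.log 2 : ℝ) : ℂ) := by rw [ofReal_log zero_le_two, ofReal_ofNat]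
  have hlog2_ne : Real.log 2 ≠ 0 := (Real.log_pos one_lt_two).ne'
  rw [hexp, hlog2, Real.logb]
  push_cast
  field_simp
  ring
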